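/- arXiv:1910.07114 — 5 statements merged into one kernel-verified Lean document; each statement's English description precedes it below -/
import Mathlib

section
/- For any g = [[a,b],[c,d]] in SL(2,ℝ), the pullback of the 1-form λ₀ = dθ + (1/y) dx on H × S¹ under the map (z, θ) ↦ ((az+b)/(cz+d), θ − 2 arg(cz+d)) equals λ₀. -/
/-- The lift to `H × ℝ` of the action of `g = [[a,b],[c,d]] ∈ SL(2,ℝ)` on the unit tangent
bundle `H × S¹`: `(z, θ) ↦ ((az+b)/(cz+d), θ − 2 arg(cz+d))`. -/
noncomputable def mobiusLift (a b c d : ℝ) (p : ℂ × ℝ) : ℂ × ℝ :=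
  (((a : ℂ) * p.1 + (b : ℂ)) / ((c : ℂ) * p.1 + (d : ℂ)),
    p.2 - 2 * Complex.arg ((c : ℂ) * p.1 + (d : ℂ)))

/-- The 1-form `λ₀ = dθ + y⁻¹ dx` on `H × S¹`. -/
noncomputable def lamZero (p v : ℂ × ℝ) : ℝ := v.2 + (p.1.im)⁻¹ * v.1.re

/-!
With `w = cz + d` and `ad - bc = 1`, the Möbius map has complex derivative `1 / w²` and
`Im g·z = Im z / |w|²`, while `arg w = Im (log w)` changes at the rate `Im (c dz / w)`.
Since `c = Im w / Im z`, the pullback of `λ₀` is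
`dθ + (Im z)⁻¹ (|w|² Re (dz / w²) - 2 Im w Im (dz / w))`, and the bracket is `Re dz`:
multiplied by `|w|²` and written in `u = dz · w̄`, it reads `Re (u w̄) - 2 Im w Im u = Re (u w)`.
-/

open Complex

theorem hasDerivAt_moebius {𝕜 : Type*} [NontriviallyNormedField 𝕜] {a b c d z : 𝕜}
    (hw : c * z + d ≠ 0) :
    HasDerivAt (fun z => (a * z + b) / (c * z + d)) ((a * d - b * c) / (c * z + d) ^ 2) z :=
  ((((hasDerivAt_id z).const_mul a).add_const b).div
    (((hasDerivAt_id z).const_mul c).add_const d) hw).congr_deriv (by simp only [id]; ring)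

theorem HasFDerivAt.arg {E : Type*} [NormedAddCommGroup E] [NormedSpace ℝ E] {f : E → ℂ}
    {f' : E →L[ℝ] ℂ} {x : E} (hf : HasFDerivAt f f' x) (hx : f x ∈ slitPlane) :
    HasFDerivAt (fun t => arg (f t)) (imCLM ∘L ((f x)⁻¹ • f')) x := by
  have hlog := (hasStrictFDerivAt_log_real hx).hasFDerivAt.comp x hf
  simp only [← log_im]
  exact (imCLM.hasFDerivAt.comp x hlog).congr_fderiv (by ext v; simp)

theorem im_moebius_eq_div_normSq (a b c d : ℝ) (z : ℂ) :
    ((a * z + b) / (c * z + d)).im = (a * d - b * c) * z.im / normSq (c * z + d) := by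
  simp only [div_im, normSq_apply, add_im, mul_im, ofReal_re, ofReal_im, zero_mul, add_zero, add_re, mul_re, sub_zero]
  ring

theorem re_div_sq_mul_normSq_sub (v w : ℂ) (hw : w ≠ 0) :
    (v / w ^ 2).re * normSq w - 2 * w.im * (v / w).im = v.re := by
  have : normSq w ≠ 0 := normSq_pos.mpr hw |>.ne'
  simp only [div_re, div_im, sq, mul_re, mul_im, normSq_mul]
  field_simp
  simp only [normSq_apply]
  ring

theorem hasFDerivAt_arg_ofReal_mul_add (c d : ℝ) {z : ℂ} (hz : z.im ≠ 0) :
    HasFDerivAt (fun z : ℂ => arg (c * z + d))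
      (imCLM ∘L ((c / (c * z + d)) • ContinuousLinearMap.id ℝ ℂ)) z := by
  rcases eq_or_ne c 0 with rfl | hc
  · simpa using (hasFDerivAt_const (arg (d : ℂ)) z).congr_fderiv (by ext v; simp)
  · have hslit : (c : ℂ) * z + d ∈ slitPlane :=
      mem_slitPlane_iff.mpr (.inr (by simpa using mul_ne_zero hc hz))
    have hlin : HasDerivAt (fun z : ℂ => c * z + d) c z := by
      simpa using ((hasDerivAt_id z).const_mul (c : ℂ)).add_const (d : ℂ)
    exact ((hlin.hasFDerivAt.restrictScalars ℝ).arg hslit).congr_fderiv (by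
      congr 1
      ext1 v
      simp only [smul_apply, ContinuousLinearMap.coe_restrictScalars',
        ContinuousLinearMap.toSpanSingleton_apply, ContinuousLinearMap.id_apply, smul_eq_mul]
      ring)

theorem ofReal_mul_add_ne_zero {a b c d : ℝ} (h : a * d - b * c ≠ 0) {z : ℂ} (hz : z.im ≠ 0) :
    (c : ℂ) * z + d ≠ 0 := by
  intro h0
  have hc : c = 0 := by simpa [hz] using congrArg im h0
  have hd : d = 0 := by simpa [hc] using congrArg re h0
  simp [hc, hd] at h

theorem fderiv_mobiusLift_apply {a b c d : ℝ} {z : ℂ} (hz : z.im ≠ 0)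
    (hw : (c : ℂ) * z + d ≠ 0) (θ : ℝ) (v : ℂ × ℝ) :
    fderiv ℝ (mobiusLift a b c d) (z, θ) v =
      ((a * d - b * c) * v.1 / (c * z + d) ^ 2, v.2 - 2 * (c * v.1 / (c * z + d)).im) := by
  have h1 := ((hasDerivAt_moebius (a := (a : ℂ)) (b := b) hw).hasFDerivAt.restrictScalars ℝ).comp
    (z, θ) (hasFDerivAt_fst (𝕜 := ℝ))
  have h2 := (hasFDerivAt_snd (𝕜 := ℝ) (p := (z, θ))).sub
    (((hasFDerivAt_arg_ofReal_mul_add c d hz).comp (z, θ) hasFDerivAt_fst).const_mul 2)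
  have hD : HasFDerivAt (mobiusLift a b c d) _ (z, θ) := h1.prodMk h2
  rw [hD.fderiv]
  simp [mul_comm, mul_div_assoc]

/-- For any `g = [[a,b],[c,d]]` in `SL(2,ℝ)`, the pullback of `λ₀ = dθ + y⁻¹ dx` under the
map `(z, θ) ↦ ((az+b)/(cz+d), θ − 2 arg(cz+d))` equals `λ₀`. -/
theorem pullback_lamZero (a b c d : ℝ) (h : a * d - b * c = 1)
    (z : ℂ) (hz : 0 < z.im) (θ : ℝ) (v : ℂ × ℝ) :
    lamZero (mobiusLift a b c d (z, θ)) (fderiv ℝ (mobiusLift a b c d) (z, θ) v)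
      = lamZero (z, θ) v := by
  have hw := ofReal_mul_add_ne_zero (h ▸ one_ne_zero) hz.ne'
  have hdet : (a : ℂ) * d - b * c = 1 := by exact_mod_cast h
  have hwim : ((c : ℂ) * z + d).im = c * z.im := by simp
  have key := re_div_sq_mul_normSq_sub v.1 _ hw
  rw [fderiv_mobiusLift_apply hz.ne' hw, lamZero, lamZero, mobiusLift]
  simp only [im_moebius_eq_div_normSq, h, hdet, one_mul, mul_div_assoc, im_ofReal_mul, hwim] at key ⊢
  field_simp
  linear_combination key
end

section
/- Let f : H × ℝ → ℝ be a smooth positive function. Then the Reeb vector field of the contact form fλ, where λ = dt + y⁻¹ dx, is given in coordinates (x,y,t) by R_{fλ} = (−y² ∂_y(1/f), −y ∂_t(1/f) + y² ∂_x(1/f), 1/f + y ∂_y(1/f)). -/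
/-- The 1-form `λ = dt + y⁻¹ dx` on `H × ℝ`, coordinates `(x, y, t)`. -/
noncomputable def lamForm (p v : ℝ × ℝ × ℝ) : ℝ := v.2.2 + (p.2.1)⁻¹ * v.1

/-- Exterior derivative of a 1-form `μ` (with constant vector arguments). -/
noncomputable def dOneForm (μ : (ℝ × ℝ × ℝ) → (ℝ × ℝ × ℝ) → ℝ) (p u v : ℝ × ℝ × ℝ) : ℝ :=
  fderiv ℝ (fun q => μ q v) p u - fderiv ℝ (fun q => μ q u) p v

/-- For a smooth positive function `f` on `H × ℝ`, the Reeb vector field of the contact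
form `fλ` (where `λ = dt + y⁻¹ dx`) is, in coordinates `(x,y,t)`,
`R_{fλ} = (−y² ∂_y(1/f), −y ∂_t(1/f) + y² ∂_x(1/f), 1/f + y ∂_y(1/f))`:
this vector satisfies `(fλ)(R) = 1` and `ι_R d(fλ) = 0`. -/
theorem reeb_of_f_lam (f : ℝ × ℝ × ℝ → ℝ) (hf : ContDiff ℝ (⊤ : ℕ∞) f) (hpos : ∀ p, 0 < f p)
    (p : ℝ × ℝ × ℝ) (hy : 0 < p.2.1) :
    let g : ℝ × ℝ × ℝ → ℝ := fun q => (f q)⁻¹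
    let R : ℝ × ℝ × ℝ :=
      (-(p.2.1) ^ 2 * fderiv ℝ g p (0, 1, 0),
        -p.2.1 * fderiv ℝ g p (0, 0, 1) + (p.2.1) ^ 2 * fderiv ℝ g p (1, 0, 0),
        g p + p.2.1 * fderiv ℝ g p (0, 1, 0))
    f p * lamForm p R = 1 ∧
      ∀ v : ℝ × ℝ × ℝ, dOneForm (fun q w => f q * lamForm q w) p R v = 0 := by
  intro g R
  have hfd : DifferentiableAt ℝ f p := (hf.differentiable (by simp)) p
  have hfne : f p ≠ 0 := (hpos p).ne'
  have hyne : p.2.1 ≠ 0 := hy.ne'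
  set F : (ℝ × ℝ × ℝ) →L[ℝ] ℝ := fderiv ℝ f p with hF
  -- derivative of g = 1/f
  have hg : HasFDerivAt g
      ((-ContinuousLinearMap.mulLeftRight ℝ ℝ (f p)⁻¹ (f p)⁻¹).comp F) p :=
    (hasFDerivAt_inv' hfne).comp p hfd.hasFDerivAt
  have hgval : ∀ u, fderiv ℝ g p u = -((f p)⁻¹ * F u * (f p)⁻¹) := by
    intro u; rw [hg.fderiv]
    simp [ContinuousLinearMap.mulLeftRight_apply]
  -- projection onto second coordinate
  set π : (ℝ × ℝ × ℝ) →L[ℝ] ℝ :=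
    (ContinuousLinearMap.fst ℝ ℝ ℝ).comp (ContinuousLinearMap.snd ℝ ℝ (ℝ × ℝ)) with hπ
  have hπval : ∀ u : ℝ × ℝ × ℝ, π u = u.2.1 := fun u => rfl
  have hπp : HasFDerivAt (fun q : ℝ × ℝ × ℝ => q.2.1) π p := π.hasFDerivAt
  have hinv : HasFDerivAt (fun q : ℝ × ℝ × ℝ => (q.2.1)⁻¹)
      ((-ContinuousLinearMap.mulLeftRight ℝ ℝ (p.2.1)⁻¹ (p.2.1)⁻¹).comp π) p :=
    (hasFDerivAt_inv' hyne).comp p hπp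
  -- derivative of q ↦ f q * lamForm q w, evaluated at u
  have hfval : ∀ u w : ℝ × ℝ × ℝ,
      fderiv ℝ (fun q => f q * lamForm q w) p u
        = f p * (-((p.2.1)⁻¹ * u.2.1 * (p.2.1)⁻¹) * w.1) + lamForm p w * F u := by
    intro u w
    have h1 := (hinv.mul_const w.1).const_add w.2.2
    have h2 := hfd.hasFDerivAt.mul h1
    have h3 : HasFDerivAt (fun q => f q * lamForm q w) _ p := h2
    rw [h3.fderiv]
    simp only [ContinuousLinearMap.add_apply, ContinuousLinearMap.smul_apply,
      ContinuousLinearMap.comp_apply, ContinuousLinearMap.neg_apply,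
      ContinuousLinearMap.mulLeftRight_apply, smul_eq_mul, lamForm, hπval, hF]
    ring
  have hlin : ∀ u : ℝ × ℝ × ℝ,
      F u = u.1 * F (1,0,0) + u.2.1 * F (0,1,0) + u.2.2 * F (0,0,1) := by
    rintro ⟨a, b, c⟩
    have hu : ((a, b, c) : ℝ × ℝ × ℝ) = a • ((1:ℝ),(0:ℝ),(0:ℝ)) + b • ((0:ℝ),(1:ℝ),(0:ℝ))
        + c • ((0:ℝ),(0:ℝ),(1:ℝ)) := by
      ext <;> simp
    rw [hu, map_add, map_add, map_smul, map_smul, map_smul, smul_eq_mul, smul_eq_mul,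
      smul_eq_mul]
    simp
  constructor
  · show f p * lamForm p R = 1
    simp only [lamForm, R, g, hgval]
    field_simp
    ring
  · intro v
    show dOneForm (fun q w => f q * lamForm q w) p R v = 0
    rw [dOneForm, hfval, hfval, hlin R, hlin v]
    simp only [lamForm, R, g, hgval]
    field_simp
    ring
end

section
/- Let φ : H → ℂ be holomorphic with a simple zero at v ∈ H, and let f = 1 + ε|φ|² for ε > 0. Then at the point v, the real linearization of the Hamiltonian vector field X_{1/f} of 1/f with respect to ω = y⁻² dx∧dy, in the basis {∂_x, ∂_y}, equals [[0, 2ε v_y² |φ'(v)|²], [−2ε v_y² |φ'(v)|², 0]], where v_y = Im v; in particular the time-T flow of the linearization is a clockwise rotation by angle 2ε v_y² |φ'(v)|² T. -/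
/-!
The Hamiltonian field is `X_{1/f} = y² i ∇(1/f)`, and for `f = 1 + ε|φ|²` with `φ` holomorphic
`∇(1/f) = -2ε φ conj(φ') / f²`. Hence `X_{1/f} = B φ` with `B = -2ε y² i conj(φ') / f²` smooth.
Since `φ(v) = 0`, the product rule leaves only `B(v) φ'(v) = -iκ` as the linearization at `v`:
multiplication by `-iκ`, whose flow is `w ↦ e^{-iκt} w`.
-/

/-- The Hamiltonian vector field of `1/f` with respect to `ω = y⁻² dx ∧ dy` on the upper
half-plane, viewed as a map `ℂ → ℂ`: `X_{1/f} = (−y² ∂_y(1/f), y² ∂_x(1/f))`. -/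
noncomputable def hamX (f : ℂ → ℝ) (z : ℂ) : ℂ :=
  ⟨-(z.im) ^ 2 * fderiv ℝ (fun w => (f w)⁻¹) z Complex.I,
    (z.im) ^ 2 * fderiv ℝ (fun w => (f w)⁻¹) z 1⟩

open Complex ComplexConjugate Filter Topology ContinuousLinearMap

theorem hamX_eq_of_hasGradientAt {f : ℂ → ℝ} {z G : ℂ}
    (h : HasGradientAt (fun w => (f w)⁻¹) G z) : hamX f z = z.im ^ 2 * I * G := by
  apply Complex.ext <;> simp [hamX, h.fderiv_apply, Complex.inner, ← ofReal_pow]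

theorem HasDerivAt.comp_hasGradientAt {F : Type*} [NormedAddCommGroup F]
    [InnerProductSpace ℝ F] [CompleteSpace F] {g : F → ℝ} {h : ℝ → ℝ} {G : F} {h' : ℝ}
    {x : F} (hh : HasDerivAt h h' (g x)) (hg : HasGradientAt g G x) :
    HasGradientAt (fun y => h (g y)) (h' • G) x := by
  rw [hasGradientAt_iff_hasFDerivAt] at hg ⊢
  refine (hh.comp_hasFDerivAt x hg).congr_fderiv ?_
  ext w
  simp

theorem HasDerivAt.hasGradientAt_norm_sq {φ : ℂ → ℂ} {φ' z : ℂ} (h : HasDerivAt φ φ' z) :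
    HasGradientAt (fun w => ‖φ w‖ ^ 2) (2 * (φ z * conj φ')) z := by
  rw [hasGradientAt_iff_hasFDerivAt]
  refine (h.hasFDerivAt.restrictScalars ℝ).norm_sq.congr_fderiv ?_
  ext w
  simp only [InnerProductSpace.toDual_apply_apply, smul_apply, comp_apply, coe_innerSL_apply,
    coe_restrictScalars', toSpanSingleton_apply, Complex.inner, smul_eq_mul, nsmul_eq_mul]
  rw [← re_ofReal_mul]
  congr 1
  simp only [map_mul, Complex.conj_conj, map_ofNat]
  push_cast
  ring

noncomputable def hamXFactor (φ : ℂ → ℂ) (ε : ℝ) (z : ℂ) : ℂ :=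
  (-(2 * ε) * z.im ^ 2 / (1 + ε * ‖φ z‖ ^ 2) ^ 2 : ℝ) * I * conj (deriv φ z)

theorem hamX_one_add_mul_norm_sq {φ : ℂ → ℂ} {ε : ℝ} {z : ℂ} (hε : 0 ≤ ε)
    (hφ : DifferentiableAt ℂ φ z) :
    hamX (fun w => 1 + ε * ‖φ w‖ ^ 2) z = hamXFactor φ ε z * φ z := by
  have hpos : 0 < 1 + ε * ‖φ z‖ ^ 2 := by positivity
  have hinv : HasDerivAt (fun s : ℝ => (1 + ε * s)⁻¹) (-ε / (1 + ε * ‖φ z‖ ^ 2) ^ 2)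
      (‖φ z‖ ^ 2) := by
    simpa using (((hasDerivAt_id' _).const_mul ε).const_add 1).fun_inv hpos.ne'
  have hgrad : HasGradientAt (fun w => (1 + ε * ‖φ w‖ ^ 2)⁻¹) _ z :=
    hinv.comp_hasGradientAt (g := fun w => ‖φ w‖ ^ 2) hφ.hasDerivAt.hasGradientAt_norm_sq
  rw [hamX_eq_of_hasGradientAt hgrad, hamXFactor, real_smul]
  push_cast
  ring

theorem AnalyticAt.differentiableAt_hamXFactor {φ : ℂ → ℂ} {ε : ℝ} {z : ℂ} (hε : 0 ≤ ε)
    (hφ : AnalyticAt ℂ φ z) : DifferentiableAt ℝ (hamXFactor φ ε) z := by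
  have hnorm : DifferentiableAt ℝ (fun w => ‖φ w‖ ^ 2) z :=
    (hφ.differentiableAt.restrictScalars ℝ).norm_sq ℝ
  have him : DifferentiableAt ℝ im z := imCLM.differentiableAt
  have hcoeff : DifferentiableAt ℝ
      (fun w : ℂ => -(2 * ε) * w.im ^ 2 / (1 + ε * ‖φ w‖ ^ 2) ^ 2) z := by
    fun_prop (disch := positivity)
  have hconj : DifferentiableAt ℝ (fun w => conj (deriv φ w)) z :=
    conjCLE.differentiableAt.comp z (hφ.deriv.differentiableAt.restrictScalars ℝ)
  exact ((ofRealCLM.differentiableAt.comp z hcoeff).mul_const I).mul hconj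

theorem HasFDerivAt.mul_of_eq_zero_right {𝕜 E 𝔸 : Type*} [NontriviallyNormedField 𝕜]
    [NormedAddCommGroup E] [NormedSpace 𝕜 E] [NormedRing 𝔸] [NormedAlgebra 𝕜 𝔸]
    {a b : E → 𝔸} {a' b' : E →L[𝕜] 𝔸} {x : E} (ha : HasFDerivAt a a' x)
    (hb : HasFDerivAt b b' x) (hb0 : b x = 0) : HasFDerivAt (a * b) (a x • b') x :=
  (ha.mul' hb).congr_fderiv (by ext; simp [hb0])

theorem hasFDerivAt_hamX_of_eq_zero {φ : ℂ → ℂ} {ε : ℝ} {v : ℂ} (hε : 0 ≤ ε)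
    (hφ : AnalyticAt ℂ φ v) (hzero : φ v = 0) :
    HasFDerivAt (hamX fun z => 1 + ε * ‖φ z‖ ^ 2)
      ((-((2 * ε * v.im ^ 2 * ‖deriv φ v‖ ^ 2 : ℝ) * I)) • (1 : ℂ →L[ℝ] ℂ)) v := by
  have heq : (hamX fun z => 1 + ε * ‖φ z‖ ^ 2) =ᶠ[𝓝 v] hamXFactor φ ε * φ :=
    hφ.eventually_analyticAt.mono fun z hz => hamX_one_add_mul_norm_sq hε hz.differentiableAt
  have hφ' : HasFDerivAt φ ((toSpanSingleton ℂ (deriv φ v)).restrictScalars ℝ) v :=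
    hφ.differentiableAt.hasDerivAt.hasFDerivAt.restrictScalars ℝ
  have hfactor : hamXFactor φ ε v = -(2 * ε * v.im ^ 2 : ℝ) * I * conj (deriv φ v) := by
    simp [hamXFactor, hzero]
  refine (((hφ.differentiableAt_hamXFactor hε).hasFDerivAt.mul_of_eq_zero_right hφ'
    hzero).congr_of_eventuallyEq heq).congr_fderiv ?_
  ext w
  simp only [hfactor, smul_apply, coe_restrictScalars', toSpanSingleton_apply, smul_eq_mul,
    one_apply_eq_self]
  push_cast
  linear_combination (-(2 * ε * v.im ^ 2 * I * w)) * conj_mul' (deriv φ v)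

theorem hasDerivAt_exp_neg_mul_I_mul (κ T : ℝ) (w : ℂ) :
    HasDerivAt (fun t : ℝ => exp (-((κ * t : ℝ) : ℂ) * I) * w)
      (-(κ * I) * (exp (-((κ * T : ℝ) : ℂ) * I) * w)) T := by
  have h := (((hasDerivAt_id' (T : ℂ)).const_mul (-(κ * I))).cexp.comp_ofReal).mul_const w
  have hrot : (fun t : ℝ => exp (-((κ * t : ℝ) : ℂ) * I) * w)
      = fun t : ℝ => exp (-(κ * I) * t) * w := by
    funext t; push_cast; ring_nf
  rw [hrot]
  exact h.congr_deriv (by push_cast; ring_nf)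

theorem linearization_of_hamX_general (φ : ℂ → ℂ) (hφ : DifferentiableOn ℂ φ {z : ℂ | 0 < z.im})
    (v : ℂ) (hv : 0 < v.im) (hzero : φ v = 0)
    (ε : ℝ) (hε : 0 < ε) :
    let f : ℂ → ℝ := fun z => 1 + ε * ‖φ z‖ ^ 2
    let κ : ℝ := 2 * ε * v.im ^ 2 * ‖deriv φ v‖ ^ 2
    (∀ w : ℂ, fderiv ℝ (hamX f) v w = (⟨κ * w.im, -(κ * w.re)⟩ : ℂ)) ∧
      ∀ T : ℝ, ∀ w : ℂ,
        HasDerivAt (fun t : ℝ => Complex.exp (-((κ * t : ℝ) : ℂ) * Complex.I) * w)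
          (fderiv ℝ (hamX f) v (Complex.exp (-((κ * T : ℝ) : ℂ) * Complex.I) * w)) T := by
  intro f κ
  have hlin : ∀ w, fderiv ℝ (hamX f) v w = -(κ * I) * w := by
    intro w
    rw [(hasFDerivAt_hamX_of_eq_zero hε.le (hφ.analyticOnNhd (isOpen_im_gt 0) v hv)
      hzero).fderiv]
    simp [κ]
  refine ⟨fun w => (hlin w).trans ?_, fun T w => ?_⟩
  · apply Complex.ext <;> simp
  · rw [hlin]
    exact hasDerivAt_exp_neg_mul_I_mul κ T w

/-- Let `φ : H → ℂ` be holomorphic with a simple zero at `v`, and `f = 1 + ε|φ|²`, `ε > 0`.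
Then the real linearization at `v` of the Hamiltonian vector field `X_{1/f}` is
`w ↦ (κ w_y, −κ w_x)` with `κ = 2ε (Im v)² |φ'(v)|²` (i.e. the matrix
`[[0, κ],[−κ, 0]]` in the basis `{∂_x, ∂_y}`); in particular the time-`T` flow of the
linearization is the clockwise rotation by angle `κT`, `w ↦ e^{−iκt} w`. -/
theorem linearization_of_hamX (φ : ℂ → ℂ) (hφ : DifferentiableOn ℂ φ {z : ℂ | 0 < z.im})
    (v : ℂ) (hv : 0 < v.im) (hzero : φ v = 0) (hsimple : deriv φ v ≠ 0)
    (ε : ℝ) (hε : 0 < ε) :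
    let f : ℂ → ℝ := fun z => 1 + ε * ‖φ z‖ ^ 2
    let κ : ℝ := 2 * ε * v.im ^ 2 * ‖deriv φ v‖ ^ 2
    (∀ w : ℂ, fderiv ℝ (hamX f) v w = (⟨κ * w.im, -(κ * w.re)⟩ : ℂ)) ∧
      ∀ T : ℝ, ∀ w : ℂ,
        HasDerivAt (fun t : ℝ => Complex.exp (-((κ * t : ℝ) : ℂ) * Complex.I) * w)
          (fderiv ℝ (hamX f) v (Complex.exp (-((κ * T : ℝ) : ℂ) * Complex.I) * w)) T :=
  linearization_of_hamX_general φ hφ v hv hzero ε hε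
end

section
/- Let Δ̃ be the group with presentation ⟨g₁, g₂, g₃ | g₁^p = g₂^q = g₃^r = g₁g₂g₃⟩ where p, q, r ≥ 2 are pairwise coprime with 1/p + 1/q + 1/r < 1. Then the commutator subgroup Π = [Δ̃, Δ̃] has index d = pqr − qr − pr − pq in Δ̃, i.e. the abelianization of Δ̃ is cyclic of order d. -/
/-- Relators of the centrally extended triangle group
`Δ̃(p,q,r) = ⟨g₁,g₂,g₃ | g₁^p = g₂^q = g₃^r = g₁g₂g₃⟩`. -/
def extTriangleRels (p q r : ℕ) : Set (FreeGroup (Fin 3)) :=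
  {FreeGroup.of 0 ^ p * (FreeGroup.of 1 ^ q)⁻¹,
    FreeGroup.of 1 ^ q * (FreeGroup.of 2 ^ r)⁻¹,
    FreeGroup.of 2 ^ r * (FreeGroup.of 0 * FreeGroup.of 1 * FreeGroup.of 2)⁻¹}

/-- The centrally extended `(p,q,r)` triangle group. -/
def ExtTriangleGroup (p q r : ℕ) := PresentedGroup (extTriangleRels p q r)

instance (p q r : ℕ) : Group (ExtTriangleGroup p q r) := by
  unfold ExtTriangleGroup; infer_instance

/-! In the abelianization write `a, b, c` for the images of `g₁, g₂, g₃` and `z = a ^ p`. The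
relations read `a ^ p = b ^ q = c ^ r = a * b * c = z`, which is invariant under cycling
`(a, p) → (b, q) → (c, r)`. Raising `a * b * c = z` to the power `q * r` gives
`a ^ (q * r) = z ^ (q * r - q - r)`, so `a` is a power of `z` because `p` is prime to `q * r`;
likewise `b` and `c`, and the abelianization is cyclic, generated by `z`. Raising `a * b * c = z` to
the power `p * q * r` gives `z ^ d = 1`. Conversely `g₁, g₂, g₃ ↦ q * r, p * r, p * q` defines a
homomorphism to `ℤ/d` sending `z` to `p * q * r`, a unit mod `d`, so `z` has order exactly `d`. -/

theorem IsCoprime.of_dvd_add {R : Type*} [CommRing R] {x y z : R} (h : IsCoprime x y)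
    (hxz : x ∣ y + z) : IsCoprime x z := by
  obtain ⟨k, hk⟩ := hxz
  have hz : z = -y + x * k := by linear_combination hk
  exact hz ▸ h.neg_right.add_mul_left_right k

theorem Nat.coprime_mul_mul_of_add_eq {p q r d : ℕ} (hpq : p.Coprime q) (hqr : q.Coprime r)
    (hpr : p.Coprime r) (hD : q * r + p * r + p * q + d = p * q * r) : (p * q * r).Coprime d := by
  have hDz : (q * r + p * r + p * q + d : ℤ) = p * q * r := by exact_mod_cast hD
  have factor {x y w : ℕ} (hxy : x.Coprime y) (hxw : x.Coprime w) (hdvd : (x : ℤ) ∣ y * w + d) :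
      IsCoprime (x : ℤ) d :=
    (Nat.isCoprime_iff_coprime.mpr (hxy.mul_right hxw)).of_dvd_add (by push_cast; exact hdvd)
  rw [← Nat.isCoprime_iff_coprime]
  push_cast
  exact ((factor hpq hpr ⟨q * r - q - r, by linear_combination hDz⟩).mul_left
    (factor hpq.symm hqr ⟨p * r - p - r, by linear_combination hDz⟩)).mul_left
    (factor hpr.symm hqr.symm ⟨p * q - p - q, by linear_combination hDz⟩)

theorem Nat.add_lt_mul_of_inv_add_inv_add_inv_lt_one {p q r : ℕ} (hp : 0 < p) (hq : 0 < q)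
    (hr : 0 < r) (h : (p : ℚ)⁻¹ + (q : ℚ)⁻¹ + (r : ℚ)⁻¹ < 1) :
    q * r + p * r + p * q < p * q * r := by
  have hp' : (0 : ℚ) < p := by exact_mod_cast hp
  have hq' : (0 : ℚ) < q := by exact_mod_cast hq
  have hr' : (0 : ℚ) < r := by exact_mod_cast hr
  field_simp at h
  exact_mod_cast (by linarith : (q * r + p * r + p * q : ℚ) < p * q * r)

theorem Subgroup.mem_of_pow_mem_of_coprime {G : Type*} [Group G] (H : Subgroup G) {x : G}
    {m n : ℕ} (hmn : m.Coprime n) (hm : x ^ m ∈ H) (hn : x ^ n ∈ H) : x ∈ H := by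
  have hx : x = (x ^ m) ^ m.gcdA n * (x ^ n) ^ m.gcdB n := by
    rw [← zpow_natCast, ← zpow_natCast, ← zpow_mul, ← zpow_mul, ← zpow_add, ← Nat.gcd_eq_gcd_ab,
      hmn.gcd_eq_one, Nat.cast_one, zpow_one]
  rw [hx]
  exact H.mul_mem (H.zpow_mem hm _) (H.zpow_mem hn _)

structure TriangleRelations {G : Type*} [Monoid G] (p q r : ℕ) (a b c z : G) : Prop where
  pow₁ : a ^ p = z
  pow₂ : b ^ q = z
  pow₃ : c ^ r = z
  mul : a * b * c = z

namespace TriangleRelations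

variable {G : Type*} {p q r : ℕ} {a b c z : G}

theorem map [Monoid G] {H : Type*} [Monoid H] (h : TriangleRelations p q r a b c z) (f : G →* H) :
    TriangleRelations p q r (f a) (f b) (f c) (f z) :=
  ⟨by rw [← map_pow, h.pow₁], by rw [← map_pow, h.pow₂], by rw [← map_pow, h.pow₃],
    by rw [← map_mul, ← map_mul, h.mul]⟩

theorem rotate [CommMonoid G] (h : TriangleRelations p q r a b c z) :
    TriangleRelations q r p b c a z :=
  ⟨h.pow₂, h.pow₃, h.pow₁, by rw [← mul_rotate, h.mul]⟩

theorem pow_mul_mul [CommMonoid G] (h : TriangleRelations p q r a b c z) :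
    z ^ (p * q * r) = z ^ (q * r + p * r + p * q) := by
  calc z ^ (p * q * r) = (a * b * c) ^ (p * q * r) := by rw [h.mul]
    _ = (a ^ p) ^ (q * r) * (b ^ q) ^ (p * r) * (c ^ r) ^ (p * q) := by
      simp only [mul_pow, ← pow_mul]; ring_nf
    _ = z ^ (q * r + p * r + p * q) := by rw [h.pow₁, h.pow₂, h.pow₃, pow_add, pow_add]

theorem mem_zpowers [CommGroup G] (h : TriangleRelations p q r a b c z) (hp : p.Coprime (q * r)) :
    a ∈ Subgroup.zpowers z := by
  have hpow : a ^ (q * r) * z ^ r * z ^ q = z ^ (q * r) := by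
    calc a ^ (q * r) * z ^ r * z ^ q = a ^ (q * r) * (b ^ q) ^ r * (c ^ r) ^ q := by
          rw [h.pow₂, h.pow₃]
      _ = (a * b * c) ^ (q * r) := by simp only [mul_pow, ← pow_mul]; ring_nf
      _ = z ^ (q * r) := by rw [h.mul]
  refine (Subgroup.zpowers z).mem_of_pow_mem_of_coprime hp ?_ ?_
  · rw [h.pow₁]; exact Subgroup.mem_zpowers z
  · rw [eq_mul_inv_of_mul_eq (eq_mul_inv_of_mul_eq hpow)]
    exact mul_mem (mul_mem (Subgroup.npow_mem_zpowers _ _)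
      (inv_mem (Subgroup.npow_mem_zpowers _ _))) (inv_mem (Subgroup.npow_mem_zpowers _ _))

end TriangleRelations

namespace ExtTriangleGroup

variable {p q r : ℕ}

def of (i : Fin 3) : ExtTriangleGroup p q r := PresentedGroup.of i

theorem triangleRelations (p q r : ℕ) :
    TriangleRelations p q r (of 0) (of 1) (of 2) ((of 0 : ExtTriangleGroup p q r) ^ p) := by
  have rel {x y : FreeGroup (Fin 3)} (h : x * y⁻¹ ∈ extTriangleRels p q r) :
      PresentedGroup.mk _ x = PresentedGroup.mk _ y :=
    PresentedGroup.mk_eq_mk_of_mul_inv_mem h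
  have h₀ : (of 0 : ExtTriangleGroup p q r) ^ p = of 1 ^ q := by
    have := rel (Set.mem_insert _ _)
    rwa [map_pow, map_pow] at this
  have h₁ : (of 1 : ExtTriangleGroup p q r) ^ q = of 2 ^ r := by
    have := rel (Set.mem_insert_of_mem _ (Set.mem_insert _ _))
    rwa [map_pow, map_pow] at this
  have h₂ : (of 2 : ExtTriangleGroup p q r) ^ r = of 0 * of 1 * of 2 := by
    have := rel (Set.mem_insert_of_mem _ (Set.mem_insert_of_mem _ rfl))
    rwa [map_pow, map_mul, map_mul] at this
  exact ⟨rfl, h₀.symm, (h₀.trans h₁).symm, h₂.symm.trans (h₀.trans h₁).symm⟩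

def lift {H : Type*} [Group H] {x : Fin 3 → H} {z : H}
    (h : TriangleRelations p q r (x 0) (x 1) (x 2) z) : ExtTriangleGroup p q r →* H :=
  PresentedGroup.toGroup (f := x) <| by
    rintro w (rfl | rfl | rfl) <;>
      simp only [map_mul, map_inv, map_pow, FreeGroup.lift_apply_of, mul_inv_eq_one, h.pow₁,
        h.pow₂, h.pow₃, h.mul]

@[simp]
theorem lift_of {H : Type*} [Group H] {x : Fin 3 → H} {z : H}
    (h : TriangleRelations p q r (x 0) (x 1) (x 2) z) (i : Fin 3) : lift h (of i) = x i :=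
  PresentedGroup.toGroup.of _

theorem mem_zpowers_abelianization (hpq : p.Coprime q) (hqr : q.Coprime r) (hpr : p.Coprime r)
    (x : Abelianization (ExtTriangleGroup p q r)) :
    x ∈ Subgroup.zpowers (Abelianization.of (of 0 ^ p)) := by
  have h := (triangleRelations p q r).map (Abelianization.of : ExtTriangleGroup p q r →* _)
  have hgen (i : Fin 3) :
      Abelianization.of (of i : ExtTriangleGroup p q r) ∈
        Subgroup.zpowers (Abelianization.of (of 0 ^ p)) := by
    fin_cases i
    · exact h.mem_zpowers (hpq.mul_right hpr)
    · exact h.rotate.mem_zpowers (hqr.mul_right hpq.symm)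
    · exact h.rotate.rotate.mem_zpowers (hpr.symm.mul_right hqr.symm)
  obtain ⟨g, rfl⟩ := QuotientGroup.mk_surjective x
  exact PresentedGroup.generated_by _ (Subgroup.comap Abelianization.of _)
    (fun i => Subgroup.mem_comap.mpr (hgen i)) g

theorem orderOf_abelianization_of_pow {d : ℕ} (hpq : p.Coprime q) (hqr : q.Coprime r)
    (hpr : p.Coprime r) (hD : q * r + p * r + p * q + d = p * q * r) (hd : d ≠ 0) :
    orderOf (Abelianization.of (of 0 ^ p) : Abelianization (ExtTriangleGroup p q r)) = d := by
  refine Nat.dvd_antisymm (orderOf_dvd_of_pow_eq_one ?_) ?_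
  · have hz := ((triangleRelations p q r).map Abelianization.of).pow_mul_mul
    rw [← hD, pow_add] at hz
    exact mul_eq_left.mp hz
  · let x : Fin 3 → Multiplicative (ZMod d) :=
      ![.ofAdd (q * r : ℕ), .ofAdd (p * r : ℕ), .ofAdd (p * q : ℕ)]
    have hDd : ((q * r + p * r + p * q : ℕ) : ZMod d) = (p * q * r : ℕ) := by
      rw [← hD, Nat.cast_add _ d, ZMod.natCast_self, add_zero]
    have hx : TriangleRelations p q r (x 0) (x 1) (x 2) (.ofAdd (p * q * r : ℕ)) := by
      refine ⟨?_, ?_, ?_, ?_⟩ <;>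
        simp only [x, Matrix.cons_val_zero, Matrix.cons_val_one, Matrix.cons_val_two,
          Matrix.head_cons, Matrix.tail_cons, ← ofAdd_nsmul, ← ofAdd_add, nsmul_eq_mul,
          EmbeddingLike.apply_eq_iff_eq]
      iterate 3 push_cast; ring
      exact_mod_cast hDd
    let φ := Abelianization.lift (lift hx)
    have hφ : φ (Abelianization.of (of 0 ^ p)) = .ofAdd (p * q * r : ℕ) := by
      simp only [φ, Abelianization.lift_apply_of, map_pow, lift_of, hx.pow₁]
    calc d = orderOf (φ (Abelianization.of (of 0 ^ p))) := by
          rw [hφ, orderOf_ofAdd_eq_addOrderOf, ZMod.addOrderOf_coe _ hd,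
            Nat.Coprime.gcd_eq_one (Nat.coprime_mul_mul_of_add_eq hpq hqr hpr hD).symm, Nat.div_one]
      _ ∣ orderOf (Abelianization.of (of 0 ^ p)) := orderOf_map_dvd φ _

end ExtTriangleGroup

/-- For `p, q, r ≥ 2` pairwise coprime with `1/p + 1/q + 1/r < 1`, the commutator subgroup
`Π = [Δ̃, Δ̃]` of `Δ̃ = ⟨g₁,g₂,g₃ | g₁^p = g₂^q = g₃^r = g₁g₂g₃⟩` has index
`d = pqr − qr − pr − pq`; i.e. the abelianization of `Δ̃` is cyclic of order `d`. -/
theorem extTriangleGroup_commutator_index (p q r : ℕ) (hp : 2 ≤ p) (hq : 2 ≤ q) (hr : 2 ≤ r)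
    (hpq : Nat.Coprime p q) (hqr : Nat.Coprime q r) (hpr : Nat.Coprime p r)
    (h : (p : ℚ)⁻¹ + (q : ℚ)⁻¹ + (r : ℚ)⁻¹ < 1) :
    ((commutator (ExtTriangleGroup p q r)).index : ℤ)
        = (p : ℤ) * q * r - q * r - p * r - p * q ∧
      IsCyclic (Abelianization (ExtTriangleGroup p q r)) := by
  obtain ⟨k, hk⟩ := Nat.exists_eq_add_of_lt
    (Nat.add_lt_mul_of_inv_add_inv_add_inv_lt_one (by omega) (by omega) (by omega) h)
  have hD : q * r + p * r + p * q + (k + 1) = p * q * r := by omega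
  have hgen := ExtTriangleGroup.mem_zpowers_abelianization hpq hqr hpr
  have hcard : Nat.card (Abelianization (ExtTriangleGroup p q r)) = k + 1 := by
    rw [← orderOf_eq_card_of_forall_mem_zpowers hgen,
      ExtTriangleGroup.orderOf_abelianization_of_pow hpq hqr hpr hD k.succ_ne_zero]
  have hindex : (commutator (ExtTriangleGroup p q r)).index =
      Nat.card (Abelianization (ExtTriangleGroup p q r)) := rfl
  refine ⟨?_, isCyclic_iff_exists_zpowers_eq_top.mpr ⟨_, (Subgroup.eq_top_iff' _).mpr hgen⟩⟩
  have hDz : (q * r + p * r + p * q + (k + 1) : ℤ) = p * q * r := by exact_mod_cast hD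
  rw [hindex, hcard]
  push_cast
  linarith
end

section
/- Let a₁, …, aₙ ≥ 2 be integers. The abelianization of the group Δ̃ = ⟨γ₁, …, γₙ, c | γ₁^{a₁} = ⋯ = γₙ^{aₙ} = c, γ₁⋯γₙ = c^{n−2}⟩ is finite of order d = (∏ⱼ aⱼ)(n − 2 − ∑ⱼ 1/aⱼ), provided this quantity is positive. -/
/-- Relators of the centrally extended polygon group
`Δ̃ = ⟨γ₁,…,γₙ, c | γ₁^{a₁} = ⋯ = γₙ^{aₙ} = c, γ₁⋯γₙ = c^{n−2}⟩`, with generators indexed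
by `Fin n ⊕ Unit` (the `Unit` generator being `c`). -/
def extPolygonRels (n : ℕ) (a : Fin n → ℕ) : Set (FreeGroup (Fin n ⊕ Unit)) :=
  {x | (∃ j : Fin n, x = FreeGroup.of (Sum.inl j) ^ a j * (FreeGroup.of (Sum.inr ()))⁻¹)
    ∨ x = (List.ofFn fun j : Fin n => FreeGroup.of (Sum.inl j)).prod
        * (FreeGroup.of (Sum.inr ()) ^ (n - 2))⁻¹}

/-- The centrally extended polygon group `Δ̃(a₁,…,aₙ)`. -/
def ExtPolygonGroup (n : ℕ) (a : Fin n → ℕ) := PresentedGroup (extPolygonRels n a)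

instance (n : ℕ) (a : Fin n → ℕ) : Group (ExtPolygonGroup n a) := by
  unfold ExtPolygonGroup; infer_instance

/-!
Abelianizing a presentation on generators `α` identifies the abelianization with `ℤ^α` modulo
the lattice spanned by the exponent vectors of the relators. For `Δ̃` this is the column lattice
of the relation matrix `[[diag a, 1], [-1, -(n - 2)]]`, whose index is `|det|`; the Schur
complement of the block `diag a` gives `det = -(∏ aⱼ)(n - 2 - ∑ 1/aⱼ)`.
-/

namespace FreeGroup

variable {α : Type*} [DecidableEq α]

def exponentVector : FreeGroup α →* Multiplicative (α → ℤ) :=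
  FreeGroup.lift fun s => .ofAdd (Pi.single s 1)

@[simp]
theorem exponentVector_of (s : α) : exponentVector (of s) = .ofAdd (Pi.single s 1) :=
  lift_apply_of

end FreeGroup

namespace PresentedGroup

open FreeGroup

variable {α : Type*} [DecidableEq α] (rels : Set (FreeGroup α))

def relationLattice : Submodule ℤ (α → ℤ) :=
  Submodule.span ℤ ((fun r => (exponentVector r).toAdd) '' rels)

noncomputable def abelianizationToQuotient :
    Additive (Abelianization (PresentedGroup rels)) →+ (α → ℤ) ⧸ relationLattice rels :=
  MonoidHom.toAdditiveLeft <| Abelianization.lift <| PresentedGroup.toGroup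
    (f := fun s => .ofAdd (Submodule.Quotient.mk (Pi.single s 1))) <| by
      have hlift : FreeGroup.lift (fun s => .ofAdd (Submodule.Quotient.mk (Pi.single s 1))) =
          (relationLattice rels).mkQ.toAddMonoidHom.toMultiplicative.comp exponentVector := by
        ext s; simp
      intro r hr
      rw [hlift, MonoidHom.comp_apply, AddMonoidHom.toMultiplicative_apply_apply, ofAdd_eq_one]
      exact (Submodule.Quotient.mk_eq_zero _).2 (Submodule.subset_span ⟨r, hr, rfl⟩)

variable [Fintype α]

noncomputable def piToAbelianization :
    (α → ℤ) →ₗ[ℤ] Additive (Abelianization (PresentedGroup rels)) :=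
  Fintype.linearCombination ℤ fun s => .ofMul (Abelianization.of (PresentedGroup.of s))

theorem piToAbelianization_exponentVector (r : FreeGroup α) :
    piToAbelianization rels (exponentVector r).toAdd = .ofMul (Abelianization.of (mk rels r)) := by
  have hcomp : (AddMonoidHom.toMultiplicativeLeft (piToAbelianization rels).toAddMonoidHom).comp
      exponentVector = Abelianization.of.comp (PresentedGroup.mk rels) := by
    ext s
    simp only [piToAbelianization, MonoidHom.coe_comp, AddMonoidHom.coe_toMultiplicativeLeft,
      LinearMap.toAddMonoidHom_coe, Function.comp_apply, exponentVector_of, toAdd_ofAdd,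
      Fintype.linearCombination_apply_single, one_smul, toMul_ofMul]
    rfl
  exact DFunLike.congr_fun hcomp r

theorem relationLattice_le_ker_piToAbelianization :
    relationLattice rels ≤ LinearMap.ker (piToAbelianization rels) := by
  refine Submodule.span_le.2 ?_
  rintro _ ⟨r, hr, rfl⟩
  simp [piToAbelianization_exponentVector, PresentedGroup.one_of_mem hr]

noncomputable def abelianizationEquiv :
    Additive (Abelianization (PresentedGroup rels)) ≃+ (α → ℤ) ⧸ relationLattice rels :=
  (abelianizationToQuotient rels).toAddEquiv
    ((relationLattice rels).liftQ _ (relationLattice_le_ker_piToAbelianization rels)).toAddMonoidHom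
    (by
      ext s
      simp [abelianizationToQuotient, piToAbelianization])
    (by
      apply AddMonoidHom.toIntLinearMap_injective
      apply Submodule.linearMap_qext
      ext s
      simp [abelianizationToQuotient, piToAbelianization, Fintype.linearCombination_apply_single])

end PresentedGroup

namespace Matrix

theorem natCard_quotient_range_mulVecLin {ι : Type*} [Fintype ι] [DecidableEq ι]
    (M : Matrix ι ι ℤ) (hM : M.det ≠ 0) :
    Nat.card ((ι → ℤ) ⧸ LinearMap.range M.mulVecLin) = M.det.natAbs := by
  have hinj : Function.Injective M.mulVecLin := fun x y hxy =>
    sub_eq_zero.1 <| eq_zero_of_mulVec_eq_zero hM <| by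
      rw [mulVec_sub, sub_eq_zero]; exact hxy
  rw [← Submodule.natAbs_det_equiv _ (LinearEquiv.ofInjective _ hinj), ← LinearMap.det_toLin']
  rfl

theorem det_fromBlocks_diagonal_replicateCol_replicateRow {m K : Type*} [Fintype m]
    [DecidableEq m] [Field K] (d : m → K) (hd : ∀ i, d i ≠ 0) (u v : m → K) (c : K) :
    (fromBlocks (diagonal d) (replicateCol Unit u) (replicateRow Unit v) (of fun _ _ => c)).det =
      (∏ i, d i) * (c - ∑ i, v i * u i / d i) := by
  let _ : Invertible (diagonal d) := invertibleOfRightInverse _ (diagonal fun i => (d i)⁻¹) <| by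
    rw [diagonal_mul_diagonal, ← diagonal_one]; congr 1; funext i; exact mul_inv_cancel₀ (hd i)
  rw [det_fromBlocks₁₁, det_diagonal, det_unique]
  have hinv : ⅟(diagonal d) = diagonal fun i => (d i)⁻¹ := rfl
  simp only [hinv, of_apply, sub_apply, mul_apply, replicateRow_apply, replicateCol_apply,
    diagonal_apply, mul_ite, mul_zero, Finset.sum_ite_eq', Finset.mem_univ, if_true]
  congr 2
  refine Finset.sum_congr rfl fun i _ => ?_
  ring

end Matrix

open Matrix

def extPolygonRelator (n : ℕ) (a : Fin n → ℕ) : Fin n ⊕ Unit → FreeGroup (Fin n ⊕ Unit)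
  | .inl j => FreeGroup.of (.inl j) ^ a j * (FreeGroup.of (.inr ()))⁻¹
  | .inr _ => (List.ofFn fun j : Fin n => FreeGroup.of (.inl j)).prod *
      (FreeGroup.of (.inr ()) ^ (n - 2))⁻¹

theorem extPolygonRels_eq_range (n : ℕ) (a : Fin n → ℕ) :
    extPolygonRels n a = Set.range (extPolygonRelator n a) := by
  ext x
  simp [extPolygonRels, extPolygonRelator, eq_comm]

def extPolygonRelMatrix (n : ℕ) (a : Fin n → ℕ) : Matrix (Fin n ⊕ Unit) (Fin n ⊕ Unit) ℤ :=
  fromBlocks (diagonal fun j => (a j : ℤ)) (replicateCol Unit 1) (replicateRow Unit (-1))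
    (of fun _ _ => -((n - 2 : ℕ) : ℤ))

theorem exponentVector_extPolygonRelator (n : ℕ) (a : Fin n → ℕ) (k : Fin n ⊕ Unit) :
    (FreeGroup.exponentVector (extPolygonRelator n a k)).toAdd = (extPolygonRelMatrix n a)ᵀ k := by
  ext i
  rcases k with j | _ <;> rcases i with i | _
  all_goals simp [extPolygonRelator, extPolygonRelMatrix, Pi.single_apply, diagonal_apply,
    map_list_prod, List.map_ofFn, List.prod_ofFn, Function.comp_def, toAdd_prod, Finset.sum_apply]
  split_ifs with h <;> simp [h]

theorem relationLattice_extPolygonRels (n : ℕ) (a : Fin n → ℕ) :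
    PresentedGroup.relationLattice (extPolygonRels n a) =
      LinearMap.range (extPolygonRelMatrix n a).mulVecLin := by
  rw [range_mulVecLin, PresentedGroup.relationLattice, extPolygonRels_eq_range, ← Set.range_comp]
  congr 2
  exact funext (exponentVector_extPolygonRelator n a)

theorem natCard_abelianization_extPolygonGroup (n : ℕ) (a : Fin n → ℕ)
    (hdet : (extPolygonRelMatrix n a).det ≠ 0) :
    Nat.card (Abelianization (ExtPolygonGroup n a)) = (extPolygonRelMatrix n a).det.natAbs := by
  rw [← natCard_quotient_range_mulVecLin _ hdet, ← relationLattice_extPolygonRels]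
  exact Nat.card_congr (Additive.ofMul.trans (PresentedGroup.abelianizationEquiv _).toEquiv)

theorem extPolygonRelMatrix_det (n : ℕ) (a : Fin n → ℕ) (hn : 2 ≤ n) (ha : ∀ j, a j ≠ 0) :
    ((extPolygonRelMatrix n a).det : ℚ) =
      -((∏ j, (a j : ℚ)) * ((n : ℚ) - 2 - ∑ j, (a j : ℚ)⁻¹)) := by
  have hmap : (extPolygonRelMatrix n a).map (fun x => (x : ℚ)) =
      fromBlocks (diagonal fun j => (a j : ℚ)) (replicateCol Unit 1) (replicateRow Unit (-1))
        (of fun _ _ => -((n : ℚ) - 2)) := by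
    ext (i | i) (j | j) <;>
      simp [extPolygonRelMatrix, diagonal_apply, apply_ite (Int.cast : ℤ → ℚ), Nat.cast_sub hn]
  rw [Int.cast_det, hmap, det_fromBlocks_diagonal_replicateCol_replicateRow _ (by simpa using ha)]
  simp only [Pi.neg_apply, Pi.one_apply, mul_one, neg_div, Finset.sum_neg_distrib, one_div]
  ring

theorem extPolygonGroup_abelianization_card_general (n : ℕ) (a : Fin n → ℕ)
    (hd : 0 < (∏ j, (a j : ℚ)) * ((n : ℚ) - 2 - ∑ j, (a j : ℚ)⁻¹)) :
    (Nat.card (Abelianization (ExtPolygonGroup n a)) : ℚ)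
      = (∏ j, (a j : ℚ)) * ((n : ℚ) - 2 - ∑ j, (a j : ℚ)⁻¹) := by
  have ha : ∀ j, a j ≠ 0 := fun j hj => by
    rw [Finset.prod_eq_zero (Finset.mem_univ j) (by simp [hj]), zero_mul] at hd
    exact lt_irrefl 0 hd
  have hn : 2 ≤ n := by
    by_contra! hn
    have hn' : (n : ℚ) < 2 := by exact_mod_cast hn
    have hsum : 0 ≤ ∑ j, (a j : ℚ)⁻¹ := by positivity
    exact hd.not_ge (mul_nonpos_of_nonneg_of_nonpos (by positivity) (by linarith))
  have hdet := extPolygonRelMatrix_det n a hn ha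
  have hdet0 : (extPolygonRelMatrix n a).det ≠ 0 := fun h0 => by
    rw [h0, Int.cast_zero] at hdet
    linarith
  rw [natCard_abelianization_extPolygonGroup n a hdet0, Nat.cast_natAbs, Int.cast_abs, hdet,
    abs_neg, abs_of_pos hd]

/-- Let `a₁,…,aₙ ≥ 2` be integers. The abelianization of
`Δ̃ = ⟨γ₁,…,γₙ, c | γ₁^{a₁} = ⋯ = γₙ^{aₙ} = c, γ₁⋯γₙ = c^{n−2}⟩` is finite of order
`d = (∏ⱼ aⱼ)(n − 2 − ∑ⱼ 1/aⱼ)`, provided this quantity is positive. -/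
theorem extPolygonGroup_abelianization_card (n : ℕ) (a : Fin n → ℕ) (ha : ∀ j, 2 ≤ a j)
    (hd : 0 < (∏ j, (a j : ℚ)) * ((n : ℚ) - 2 - ∑ j, (a j : ℚ)⁻¹)) :
    (Nat.card (Abelianization (ExtPolygonGroup n a)) : ℚ)
      = (∏ j, (a j : ℚ)) * ((n : ℚ) - 2 - ∑ j, (a j : ℚ)⁻¹) :=
  extPolygonGroup_abelianization_card_general n a hd
end
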